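/- arXiv:2404.11616 — 6 statements merged into one kernel-verified Lean document; each statement's English description precedes it below -/
import Mathlib

section
/- Nested Gronwall inequality: Let a ≤ b be real numbers and let y, f, g, h : [a,b] → [0,∞) be continuous functions with f nondecreasing. Suppose that y(s) ≤ f(s) + ∫_a^s h(t)·( y(t) + ∫_a^t g(τ)·y(τ) dτ ) dt for all s ∈ [a,b]. Then for all s ∈ [a,b]: (a) y(s) ≤ f(s)·( 1 + ∫_a^s h(t)·exp(∫_a^t (h(τ)+g(τ)) dτ) dt ), and (b) y(s) ≤ f(s)·exp(∫_a^s (h(t)+g(t)) dt). In particular, if f is identically 0 then y is identically 0 on [a,b]. -/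
/-! Put `u t = y t + ∫_a^t g y`. Since `g y ≤ g u`, the hypothesis gives the linear integral
inequality `u s ≤ f s + ∫_a^s (h + g) u`, and the classical Gronwall lemma (the function
`(C + ∫_a^s K u) · exp (-∫_a^s K)` is nonincreasing) yields `y ≤ u ≤ f · exp (∫ (h + g))`, which
is (b). Substituting this bound for `u` back into `∫_a^s h u` gives (a). -/

open intervalIntegral Set Real

section Primitive

variable {a b : ℝ} {φ : ℝ → ℝ}

theorem ContinuousOn.intervalIntegrable_of_mem_Icc (hφ : ContinuousOn φ (Icc a b)) {s : ℝ}
    (hs : s ∈ Icc a b) : IntervalIntegrable φ MeasureTheory.volume a s :=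
  (hφ.mono (Icc_subset_Icc_right hs.2)).intervalIntegrable_of_Icc hs.1

theorem ContinuousOn.continuousOn_primitive_of_Icc (hφ : ContinuousOn φ (Icc a b)) :
    ContinuousOn (fun s => ∫ t in a..s, φ t) (Icc a b) := by
  rcases le_or_gt a b with hab | hba
  · rw [← uIcc_of_le hab] at hφ ⊢
    exact continuousOn_primitive_interval hφ.integrableOn_uIcc
  · simp [Icc_eq_empty_of_lt hba]

theorem ContinuousOn.hasDerivAt_primitive_of_mem_Ioo (hφ : ContinuousOn φ (Icc a b)) {x : ℝ}
    (hx : x ∈ Ioo a b) : HasDerivAt (fun s => ∫ t in a..s, φ t) (φ x) x :=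
  integral_hasDerivAt_right (hφ.intervalIntegrable_of_mem_Icc (Ioo_subset_Icc_self hx))
    ((hφ.mono Ioo_subset_Icc_self).stronglyMeasurableAtFilter isOpen_Ioo x hx)
    (hφ.continuousAt (Icc_mem_nhds hx.1 hx.2))

end Primitive

section Gronwall

variable {a b : ℝ} {u K : ℝ → ℝ}

theorem le_const_mul_exp_integral_of_le_const_add_integral (hu : ContinuousOn u (Icc a b))
    (hK : ContinuousOn K (Icc a b)) (hK0 : ∀ t ∈ Icc a b, 0 ≤ K t) {C : ℝ}
    (hle : ∀ s ∈ Icc a b, u s ≤ C + ∫ t in a..s, K t * u t) :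
    ∀ s ∈ Icc a b, u s ≤ C * exp (∫ t in a..s, K t) := by
  set P : ℝ → ℝ := fun s => ∫ t in a..s, K t
  set V : ℝ → ℝ := fun s => C + ∫ t in a..s, K t * u t
  have hKu : ContinuousOn (fun t => K t * u t) (Icc a b) := hK.mul hu
  have hanti : AntitoneOn (fun s => V s * exp (-P s)) (Icc a b) := by
    refine antitoneOn_of_hasDerivWithinAt_nonpos (convex_Icc a b)
      (f' := fun x => K x * u x * exp (-P x) + V x * (exp (-P x) * -K x))
      ((continuousOn_const.add hKu.continuousOn_primitive_of_Icc).mul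
        (continuous_exp.comp_continuousOn hK.continuousOn_primitive_of_Icc.neg))
      (fun x hx => ?_) (fun x hx => ?_)
    · rw [interior_Icc] at hx
      exact (((hKu.hasDerivAt_primitive_of_mem_Ioo hx).const_add C).mul
        (hK.hasDerivAt_primitive_of_mem_Ioo hx).neg.exp).hasDerivWithinAt
    · rw [interior_Icc] at hx
      have hxI := Ioo_subset_Icc_self hx
      have hKuV : K x * (u x - V x) ≤ 0 := mul_nonpos_of_nonneg_of_nonpos (hK0 x hxI)
        (sub_nonpos.2 (hle x hxI))
      nlinarith [exp_pos (-P x)]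
  intro s hs
  have hVs : V s * exp (-P s) ≤ C := by
    simpa [V, P] using hanti (left_mem_Icc.2 (hs.1.trans hs.2)) hs hs.1
  calc u s ≤ V s := hle s hs
    _ = V s * exp (-P s) * exp (P s) := by rw [mul_assoc, ← exp_add, neg_add_cancel, exp_zero,
        mul_one]
    _ ≤ C * exp (P s) := by gcongr

theorem le_mul_exp_integral_of_le_add_integral {φ : ℝ → ℝ} (hu : ContinuousOn u (Icc a b))
    (hK : ContinuousOn K (Icc a b)) (hK0 : ∀ t ∈ Icc a b, 0 ≤ K t) (hφ : MonotoneOn φ (Icc a b))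
    (hle : ∀ s ∈ Icc a b, u s ≤ φ s + ∫ t in a..s, K t * u t) :
    ∀ s ∈ Icc a b, u s ≤ φ s * exp (∫ t in a..s, K t) := by
  intro s hs
  have hsub : Icc a s ⊆ Icc a b := Icc_subset_Icc_right hs.2
  refine le_const_mul_exp_integral_of_le_const_add_integral (hu.mono hsub) (hK.mono hsub)
    (fun t ht => hK0 t (hsub ht)) (fun t ht => ?_) s (right_mem_Icc.2 hs.1)
  grw [hle t (hsub ht), hφ (hsub ht) hs ht.2]

end Gronwall

section Nested

variable {a b : ℝ} {y f g h : ℝ → ℝ}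

theorem le_self_add_integral_mul (hg0 : ∀ s ∈ Icc a b, 0 ≤ g s) (hy0 : ∀ s ∈ Icc a b, 0 ≤ y s) :
    ∀ s ∈ Icc a b, y s ≤ y s + ∫ t in a..s, g t * y t := by
  intro s hs
  refine le_add_of_nonneg_right (integral_nonneg hs.1 fun t ht => ?_)
  have htI := Icc_subset_Icc_right hs.2 ht
  exact mul_nonneg (hg0 t htI) (hy0 t htI)

theorem add_integral_mul_le_add_integral_of_nested (hy : ContinuousOn y (Icc a b))
    (hg : ContinuousOn g (Icc a b)) (hh : ContinuousOn h (Icc a b))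
    (hy0 : ∀ s ∈ Icc a b, 0 ≤ y s) (hg0 : ∀ s ∈ Icc a b, 0 ≤ g s)
    (hineq : ∀ s ∈ Icc a b, y s ≤ f s + ∫ t in a..s, h t * (y t + ∫ τ in a..t, g τ * y τ)) :
    ∀ s ∈ Icc a b, y s + ∫ t in a..s, g t * y t ≤
      f s + ∫ t in a..s, (h t + g t) * (y t + ∫ τ in a..t, g τ * y τ) := by
  intro s hs
  set u : ℝ → ℝ := fun t => y t + ∫ τ in a..t, g τ * y τ
  have hu : ContinuousOn u (Icc a b) := hy.add (hg.mul hy).continuousOn_primitive_of_Icc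
  have hhu : IntervalIntegrable (fun t => h t * u t) MeasureTheory.volume a s :=
    (hh.mul hu).intervalIntegrable_of_mem_Icc hs
  have hgy : IntervalIntegrable (fun t => g t * y t) MeasureTheory.volume a s :=
    (hg.mul hy).intervalIntegrable_of_mem_Icc hs
  have hsplit : (∫ t in a..s, h t * u t) + ∫ t in a..s, g t * y t ≤
      ∫ t in a..s, (h t + g t) * u t := by
    rw [← integral_add hhu hgy]
    refine integral_mono_on hs.1 (hhu.add hgy)
      (((hh.add hg).mul hu).intervalIntegrable_of_mem_Icc hs) fun t ht => ?_
    have htI := Icc_subset_Icc_right hs.2 ht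
    rw [add_mul]
    exact add_le_add_right
      (mul_le_mul_of_nonneg_left (le_self_add_integral_mul hg0 hy0 t htI) (hg0 t htI)) _
  linarith [hineq s hs]

theorem le_mul_one_add_integral_of_le_mul {u e : ℝ → ℝ} (hu : ContinuousOn u (Icc a b))
    (he : ContinuousOn e (Icc a b)) (hh : ContinuousOn h (Icc a b))
    (hh0 : ∀ s ∈ Icc a b, 0 ≤ h s) (he0 : ∀ s ∈ Icc a b, 0 ≤ e s) (hf : MonotoneOn f (Icc a b))
    (hue : ∀ s ∈ Icc a b, u s ≤ f s * e s)
    (hle : ∀ s ∈ Icc a b, y s ≤ f s + ∫ t in a..s, h t * u t) :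
    ∀ s ∈ Icc a b, y s ≤ f s * (1 + ∫ t in a..s, h t * e t) := by
  intro s hs
  have hint : ∫ t in a..s, h t * u t ≤ ∫ t in a..s, f s * (h t * e t) := by
    refine integral_mono_on hs.1 ((hh.mul hu).intervalIntegrable_of_mem_Icc hs)
      ((continuousOn_const.mul (hh.mul he)).intervalIntegrable_of_mem_Icc hs) fun t ht => ?_
    have htI := Icc_subset_Icc_right hs.2 ht
    calc h t * u t ≤ h t * (f s * e t) := mul_le_mul_of_nonneg_left
          ((hue t htI).trans (mul_le_mul_of_nonneg_right (hf htI hs ht.2) (he0 t htI))) (hh0 t htI)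
      _ = f s * (h t * e t) := by ring
  rw [integral_const_mul] at hint
  rw [mul_one_add]
  linarith [hle s hs]

end Nested

theorem nested_gronwall_general (a b : ℝ)
    (y f g h : ℝ → ℝ)
    (hy : ContinuousOn y (Set.Icc a b))
    (hg : ContinuousOn g (Set.Icc a b)) (hh : ContinuousOn h (Set.Icc a b))
    (hy0 : ∀ s ∈ Set.Icc a b, 0 ≤ y s)
    (hg0 : ∀ s ∈ Set.Icc a b, 0 ≤ g s) (hh0 : ∀ s ∈ Set.Icc a b, 0 ≤ h s)
    (hfmono : MonotoneOn f (Set.Icc a b))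
    (hineq : ∀ s ∈ Set.Icc a b,
      y s ≤ f s + ∫ t in a..s, h t * (y t + ∫ τ in a..t, g τ * y τ)) :
    (∀ s ∈ Set.Icc a b,
      y s ≤ f s * (1 + ∫ t in a..s, h t * Real.exp (∫ τ in a..t, (h τ + g τ)))) ∧
    (∀ s ∈ Set.Icc a b,
      y s ≤ f s * Real.exp (∫ t in a..s, (h t + g t))) ∧
    ((∀ s ∈ Set.Icc a b, f s = 0) → ∀ s ∈ Set.Icc a b, y s = 0) := by
  set u : ℝ → ℝ := fun t => y t + ∫ τ in a..t, g τ * y τ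
  have hu : ContinuousOn u (Icc a b) := hy.add (hg.mul hy).continuousOn_primitive_of_Icc
  have hub : ∀ s ∈ Icc a b, u s ≤ f s * exp (∫ t in a..s, (h t + g t)) :=
    le_mul_exp_integral_of_le_add_integral hu (hh.add hg)
      (fun t ht => add_nonneg (hh0 t ht) (hg0 t ht)) hfmono
      (add_integral_mul_le_add_integral_of_nested hy hg hh hy0 hg0 hineq)
  have hb : ∀ s ∈ Icc a b, y s ≤ f s * exp (∫ t in a..s, (h t + g t)) :=
    fun s hs => (le_self_add_integral_mul hg0 hy0 s hs).trans (hub s hs)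
  refine ⟨le_mul_one_add_integral_of_le_mul hu
      (continuous_exp.comp_continuousOn (hh.add hg).continuousOn_primitive_of_Icc) hh hh0
      (fun t _ => (exp_pos _).le) hfmono hub hineq, hb, fun hf0 s hs => ?_⟩
  exact le_antisymm (by simpa [hf0 s hs] using hb s hs) (hy0 s hs)

/-- Nested Gronwall inequality on `[a, b] ⊆ ℝ`: if
`y s ≤ f s + ∫_a^s h t * (y t + ∫_a^t g τ * y τ dτ) dt` with `y, f, g, h` continuous and
nonnegative on `[a, b]` and `f` nondecreasing, then
(a) `y s ≤ f s * (1 + ∫_a^s h t * exp (∫_a^t (h + g)) dt)`,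
(b) `y s ≤ f s * exp (∫_a^s (h + g))`, and in particular `f ≡ 0` implies `y ≡ 0`. -/
theorem nested_gronwall (a b : ℝ) (hab : a ≤ b)
    (y f g h : ℝ → ℝ)
    (hy : ContinuousOn y (Set.Icc a b)) (hf : ContinuousOn f (Set.Icc a b))
    (hg : ContinuousOn g (Set.Icc a b)) (hh : ContinuousOn h (Set.Icc a b))
    (hy0 : ∀ s ∈ Set.Icc a b, 0 ≤ y s) (hf0 : ∀ s ∈ Set.Icc a b, 0 ≤ f s)
    (hg0 : ∀ s ∈ Set.Icc a b, 0 ≤ g s) (hh0 : ∀ s ∈ Set.Icc a b, 0 ≤ h s)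
    (hfmono : MonotoneOn f (Set.Icc a b))
    (hineq : ∀ s ∈ Set.Icc a b,
      y s ≤ f s + ∫ t in a..s, h t * (y t + ∫ τ in a..t, g τ * y τ)) :
    (∀ s ∈ Set.Icc a b,
      y s ≤ f s * (1 + ∫ t in a..s, h t * Real.exp (∫ τ in a..t, (h τ + g τ)))) ∧
    (∀ s ∈ Set.Icc a b,
      y s ≤ f s * Real.exp (∫ t in a..s, (h t + g t))) ∧
    ((∀ s ∈ Set.Icc a b, f s = 0) → ∀ s ∈ Set.Icc a b, y s = 0) :=
  nested_gronwall_general a b y f g h hy hg hh hy0 hg0 hh0 hfmono hineq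
end

section
/- If f : ℝ → Y is asymptotically almost automorphic, then the set { f(s) : s ≥ 0 } is a relatively compact subset of Y. -/
open Filter Topology

/-- A continuous function `f : ℝ → Y` is almost automorphic if for every sequence of reals
there is a subsequence `(τ n)` and a function `f̄` such that `f (s + τ n) → f̄ s` and
`f̄ (s - τ n) → f s` pointwise. -/
def AlmostAutomorphic {Y : Type*} [NormedAddCommGroup Y] (f : ℝ → Y) : Prop :=
  Continuous f ∧
  ∀ s : ℕ → ℝ, ∃ (φ : ℕ → ℕ) (fbar : ℝ → Y), StrictMono φ ∧
    (∀ t : ℝ, Tendsto (fun n => f (t + s (φ n))) atTop (𝓝 (fbar t))) ∧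
    (∀ t : ℝ, Tendsto (fun n => fbar (t - s (φ n))) atTop (𝓝 (f t)))

/-- `f : ℝ → Y` is asymptotically almost automorphic if `f = g + φ` where `g` is almost
automorphic and `φ` is continuous with `‖φ s‖ → 0` as `s → +∞`. -/
def AsymptoticallyAlmostAutomorphic {Y : Type*} [NormedAddCommGroup Y] (f : ℝ → Y) : Prop :=
  ∃ g φ : ℝ → Y, AlmostAutomorphic g ∧ Continuous φ ∧
    Tendsto (fun s => ‖φ s‖) atTop (𝓝 0) ∧ ∀ s, f s = g s + φ s

/-! Every sequence `g (s n)` has the convergent subsequence `g (0 + s (φ n)) → ḡ 0`, so the range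
of the almost automorphic part `g` is relatively compact; a continuous `φ` with a limit at `+∞`
has relatively compact image of `[0, ∞)`. Hence `f '' [0, ∞)` lies in the sum of two compact
sets. -/

open Set Pointwise

theorem isCompact_closure_of_forall_exists_subseq_tendsto {X : Type*} [PseudoMetricSpace X]
    {s : Set X}
    (h : ∀ u : ℕ → X, (∀ n, u n ∈ s) → ∃ a, ∃ φ : ℕ → ℕ, StrictMono φ ∧
      Tendsto (u ∘ φ) atTop (𝓝 a)) :
    IsCompact (closure s) := by
  refine IsSeqCompact.isCompact fun x hx => ?_
  have hu : ∀ n, ∃ y ∈ s, dist (x n) y < 1 / ((n : ℝ) + 1) :=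
    fun n => Metric.mem_closure_iff.1 (hx n) _ Nat.one_div_pos_of_nat
  choose u hus hux using hu
  obtain ⟨a, φ, hφ, hua⟩ := h u hus
  have hdist : Tendsto (fun n => dist (u (φ n)) (x (φ n))) atTop (𝓝 0) :=
    squeeze_zero (fun _ => dist_nonneg) (fun n => (dist_comm (x (φ n)) _ ▸ hux (φ n)).le)
      (tendsto_one_div_add_atTop_nhds_zero_nat.comp hφ.tendsto_atTop)
  exact ⟨a, mem_closure_of_tendsto hua (Eventually.of_forall fun n => hus (φ n)), φ, hφ,
    hua.congr_dist hdist⟩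

theorem AlmostAutomorphic.isCompact_closure_range {Y : Type*} [NormedAddCommGroup Y]
    {g : ℝ → Y} (hg : AlmostAutomorphic g) : IsCompact (closure (range g)) := by
  refine isCompact_closure_of_forall_exists_subseq_tendsto fun u hu => ?_
  choose s hs using hu
  obtain ⟨φ, gbar, hφ, hgbar, -⟩ := hg.2 s
  refine ⟨gbar 0, φ, hφ, ?_⟩
  simpa [Function.comp_def, hs] using hgbar 0

-- `φ '' [a, ∞)` is covered by the range of `s ↦ φ (a + |s|)`, which converges along the
-- cocompact filter of `ℝ`.
theorem isCompact_closure_image_Ici_of_tendsto_atTop {X : Type*} [TopologicalSpace X]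
    [T2Space X] {φ : ℝ → X} {y : X} (hφc : Continuous φ) (hφ : Tendsto φ atTop (𝓝 y))
    (a : ℝ) :
    IsCompact (closure (φ '' Ici a)) := by
  have hshift : Tendsto (fun s : ℝ => a + |s|) (cocompact ℝ) atTop := by
    rw [cocompact_eq_atBot_atTop, tendsto_sup]
    exact ⟨tendsto_atTop_add_const_left _ _ tendsto_abs_atBot_atTop,
      tendsto_atTop_add_const_left _ _ tendsto_abs_atTop_atTop⟩
  have hK := (hφ.comp hshift).isCompact_insert_range_of_cocompact (by fun_prop)
  refine hK.closure_of_subset ?_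
  rintro _ ⟨r, hr, rfl⟩
  refine mem_insert_of_mem _ ⟨r - a, ?_⟩
  simp [abs_of_nonneg (sub_nonneg.2 (mem_Ici.1 hr))]

theorem image_Ici_relatively_compact_of_asymptoticallyAlmostAutomorphic_general
    {Y : Type*} [NormedAddCommGroup Y]
    (f : ℝ → Y) (hf : AsymptoticallyAlmostAutomorphic f) :
    IsCompact (closure (f '' Set.Ici (0 : ℝ))) := by
  obtain ⟨g, φ, hg, hφc, hφ0, hfeq⟩ := hf
  have hφK : IsCompact (closure (φ '' Ici 0)) :=
    isCompact_closure_image_Ici_of_tendsto_atTop hφc (tendsto_zero_iff_norm_tendsto_zero.2 hφ0) 0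
  have hK : IsCompact (closure (range g) + closure (φ '' Ici 0)) :=
    hg.isCompact_closure_range.add hφK
  have hsub : f '' Ici 0 ⊆ closure (range g) + closure (φ '' Ici 0) := by
    rintro _ ⟨r, hr, rfl⟩
    exact hfeq r ▸ add_mem_add (subset_closure (mem_range_self r))
      (subset_closure (mem_image_of_mem φ hr))
  exact hK.of_isClosed_subset isClosed_closure (closure_minimal hsub hK.isClosed)

/-- If `f : ℝ → Y` is asymptotically almost automorphic, then `{ f s : s ≥ 0 }` is
relatively compact in `Y`. -/
theorem image_Ici_relatively_compact_of_asymptoticallyAlmostAutomorphic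
    {Y : Type*} [NormedAddCommGroup Y] [NormedSpace ℝ Y] [CompleteSpace Y]
    (f : ℝ → Y) (hf : AsymptoticallyAlmostAutomorphic f) :
    IsCompact (closure (f '' Set.Ici (0 : ℝ))) :=
  image_Ici_relatively_compact_of_asymptoticallyAlmostAutomorphic_general f hf
end

section
/- Composition of almost automorphic functions: Let F : ℝ × Y × Y → Y be continuous and almost automorphic in its first variable, and suppose there is an almost automorphic function L_F : ℝ → [0,∞) such that ‖F(s,x₁,y₁) − F(s,x₂,y₂)‖ ≤ L_F(s)·(‖x₁ − x₂‖ + ‖y₁ − y₂‖) for all s ∈ ℝ and all x₁, x₂, y₁, y₂ ∈ Y. Then for any almost automorphic functions x, y : ℝ → Y, the function Ψ : ℝ → Y defined by Ψ(s) = F(s, x(s), y(s)) is almost automorphic. -/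
open Filter Topology

/-- `F : ℝ × Y × Y → Y` is almost automorphic in its first variable: for every sequence of
reals there is a subsequence `(τ n)` and a function `F̃` such that `F (s + τ n) x y → F̃ s x y`
and `F̃ (s - τ n) x y → F s x y` for all `s, x, y`. -/
def AlmostAutomorphicIn1 {Y : Type*} [NormedAddCommGroup Y] (F : ℝ → Y → Y → Y) : Prop :=
  ∀ s : ℕ → ℝ, ∃ (φ : ℕ → ℕ) (Ftil : ℝ → Y → Y → Y), StrictMono φ ∧
    (∀ (t : ℝ) (x y : Y),
      Tendsto (fun n => F (t + s (φ n)) x y) atTop (𝓝 (Ftil t x y))) ∧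
    (∀ (t : ℝ) (x y : Y),
      Tendsto (fun n => Ftil (t - s (φ n)) x y) atTop (𝓝 (F t x y)))

/-- Composition of almost automorphic functions: if `F` is continuous, almost automorphic in
its first variable, and Lipschitz in its last two variables with almost automorphic
nonnegative Lipschitz coefficient `L_F`, then for almost automorphic `x, y : ℝ → Y` the
function `s ↦ F s (x s) (y s)` is almost automorphic. -/
theorem almostAutomorphic_comp
    {Y : Type*} [NormedAddCommGroup Y] [NormedSpace ℝ Y] [CompleteSpace Y]
    (F : ℝ → Y → Y → Y)
    (hFcont : Continuous fun p : ℝ × Y × Y => F p.1 p.2.1 p.2.2)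
    (hFaa : AlmostAutomorphicIn1 F)
    (LF : ℝ → ℝ) (hLF0 : ∀ s, 0 ≤ LF s) (hLFaa : AlmostAutomorphic LF)
    (hFlip : ∀ (s : ℝ) (x₁ x₂ y₁ y₂ : Y),
      ‖F s x₁ y₁ - F s x₂ y₂‖ ≤ LF s * (‖x₁ - x₂‖ + ‖y₁ - y₂‖))
    (x y : ℝ → Y) (hx : AlmostAutomorphic x) (hy : AlmostAutomorphic y) :
    AlmostAutomorphic (fun s => F s (x s) (y s)) := by
  constructor
  · exact hFcont.comp (continuous_id.prodMk (hx.1.prodMk hy.1))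
  intro s
  obtain ⟨φ1, xb, hφ1, hx1, hx2⟩ := hx.2 s
  obtain ⟨φ2, yb, hφ2, hy1, hy2⟩ := hy.2 (s ∘ φ1)
  obtain ⟨φ3, Lb, hφ3, hL1, hL2⟩ := hLFaa.2 (s ∘ φ1 ∘ φ2)
  obtain ⟨φ4, Ft, hφ4, hF1, hF2⟩ := hFaa (s ∘ φ1 ∘ φ2 ∘ φ3)
  set φ : ℕ → ℕ := φ1 ∘ (φ2 ∘ (φ3 ∘ φ4)) with hφdef
  -- upgraded convergences along the common subsequence
  have hx1' : ∀ t : ℝ, Tendsto (fun n => x (t + s (φ n))) atTop (𝓝 (xb t)) :=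
    fun t => (hx1 t).comp ((hφ2.comp (hφ3.comp hφ4)).tendsto_atTop)
  have hy1' : ∀ t : ℝ, Tendsto (fun n => y (t + s (φ n))) atTop (𝓝 (yb t)) :=
    fun t => (hy1 t).comp ((hφ3.comp hφ4).tendsto_atTop)
  have hL1' : ∀ t : ℝ, Tendsto (fun n => LF (t + s (φ n))) atTop (𝓝 (Lb t)) :=
    fun t => (hL1 t).comp (hφ4.tendsto_atTop)
  have hx2' : ∀ t : ℝ, Tendsto (fun n => xb (t - s (φ n))) atTop (𝓝 (x t)) :=
    fun t => (hx2 t).comp ((hφ2.comp (hφ3.comp hφ4)).tendsto_atTop)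
  have hy2' : ∀ t : ℝ, Tendsto (fun n => yb (t - s (φ n))) atTop (𝓝 (y t)) :=
    fun t => (hy2 t).comp ((hφ3.comp hφ4).tendsto_atTop)
  have hL2' : ∀ t : ℝ, Tendsto (fun n => Lb (t - s (φ n))) atTop (𝓝 (LF t)) :=
    fun t => (hL2 t).comp (hφ4.tendsto_atTop)
  have hLF1' : ∀ u : ℝ, Tendsto (fun n => LF (u + s (φ n))) atTop (𝓝 (Lb u)) := hL1'
  -- Ftil is Lipschitz with coefficient Lb
  have hFtLip : ∀ (u : ℝ) (x₁ x₂ y₁ y₂ : Y),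
      ‖Ft u x₁ y₁ - Ft u x₂ y₂‖ ≤ Lb u * (‖x₁ - x₂‖ + ‖y₁ - y₂‖) := by
    intro u x₁ x₂ y₁ y₂
    have h1 : Tendsto (fun n => ‖F (u + s (φ n)) x₁ y₁ - F (u + s (φ n)) x₂ y₂‖)
        atTop (𝓝 ‖Ft u x₁ y₁ - Ft u x₂ y₂‖) := ((hF1 u x₁ y₁).sub (hF1 u x₂ y₂)).norm
    have h2 : Tendsto (fun n => LF (u + s (φ n)) * (‖x₁ - x₂‖ + ‖y₁ - y₂‖))
        atTop (𝓝 (Lb u * (‖x₁ - x₂‖ + ‖y₁ - y₂‖))) := (hLF1' u).mul_const _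
    exact le_of_tendsto_of_tendsto' h1 h2 (fun n => hFlip _ _ _ _ _)
  refine ⟨φ, fun t => Ft t (xb t) (yb t), hφ1.comp (hφ2.comp (hφ3.comp hφ4)), ?_, ?_⟩
  · -- forward convergence
    intro t
    rw [tendsto_iff_norm_sub_tendsto_zero]
    have hbound : ∀ n,
        ‖F (t + s (φ n)) (x (t + s (φ n))) (y (t + s (φ n))) - Ft t (xb t) (yb t)‖ ≤
        LF (t + s (φ n)) * (‖x (t + s (φ n)) - xb t‖ + ‖y (t + s (φ n)) - yb t‖) +
          ‖F (t + s (φ n)) (xb t) (yb t) - Ft t (xb t) (yb t)‖ := by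
      intro n
      calc ‖F (t + s (φ n)) (x (t + s (φ n))) (y (t + s (φ n))) - Ft t (xb t) (yb t)‖
          = ‖(F (t + s (φ n)) (x (t + s (φ n))) (y (t + s (φ n)))
                - F (t + s (φ n)) (xb t) (yb t))
              + (F (t + s (φ n)) (xb t) (yb t) - Ft t (xb t) (yb t))‖ := by
            rw [sub_add_sub_cancel]
        _ ≤ ‖F (t + s (φ n)) (x (t + s (φ n))) (y (t + s (φ n)))
                - F (t + s (φ n)) (xb t) (yb t)‖
              + ‖F (t + s (φ n)) (xb t) (yb t) - Ft t (xb t) (yb t)‖ := norm_add_le _ _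
        _ ≤ _ := by gcongr; exact hFlip _ _ _ _ _
    have hb : Tendsto (fun n =>
        LF (t + s (φ n)) * (‖x (t + s (φ n)) - xb t‖ + ‖y (t + s (φ n)) - yb t‖) +
          ‖F (t + s (φ n)) (xb t) (yb t) - Ft t (xb t) (yb t)‖) atTop (𝓝 0) := by
      have h1 : Tendsto (fun n => ‖x (t + s (φ n)) - xb t‖) atTop (𝓝 0) :=
        tendsto_iff_norm_sub_tendsto_zero.mp (hx1' t)
      have h2 : Tendsto (fun n => ‖y (t + s (φ n)) - yb t‖) atTop (𝓝 0) :=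
        tendsto_iff_norm_sub_tendsto_zero.mp (hy1' t)
      have h3 : Tendsto (fun n => ‖F (t + s (φ n)) (xb t) (yb t) - Ft t (xb t) (yb t)‖)
          atTop (𝓝 0) := tendsto_iff_norm_sub_tendsto_zero.mp (hF1 t (xb t) (yb t))
      have := ((hL1' t).mul (h1.add h2)).add h3
      simpa using this
    exact squeeze_zero (fun n => norm_nonneg _) hbound hb
  · -- backward convergence
    intro t
    rw [tendsto_iff_norm_sub_tendsto_zero]
    have hbound : ∀ n,
        ‖Ft (t - s (φ n)) (xb (t - s (φ n))) (yb (t - s (φ n))) - F t (x t) (y t)‖ ≤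
        Lb (t - s (φ n)) * (‖xb (t - s (φ n)) - x t‖ + ‖yb (t - s (φ n)) - y t‖) +
          ‖Ft (t - s (φ n)) (x t) (y t) - F t (x t) (y t)‖ := by
      intro n
      calc ‖Ft (t - s (φ n)) (xb (t - s (φ n))) (yb (t - s (φ n))) - F t (x t) (y t)‖
          = ‖(Ft (t - s (φ n)) (xb (t - s (φ n))) (yb (t - s (φ n)))
                - Ft (t - s (φ n)) (x t) (y t))
              + (Ft (t - s (φ n)) (x t) (y t) - F t (x t) (y t))‖ := by
            rw [sub_add_sub_cancel]
        _ ≤ ‖Ft (t - s (φ n)) (xb (t - s (φ n))) (yb (t - s (φ n)))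
                - Ft (t - s (φ n)) (x t) (y t)‖
              + ‖Ft (t - s (φ n)) (x t) (y t) - F t (x t) (y t)‖ := norm_add_le _ _
        _ ≤ _ := by gcongr; exact hFtLip _ _ _ _ _
    have hb : Tendsto (fun n =>
        Lb (t - s (φ n)) * (‖xb (t - s (φ n)) - x t‖ + ‖yb (t - s (φ n)) - y t‖) +
          ‖Ft (t - s (φ n)) (x t) (y t) - F t (x t) (y t)‖) atTop (𝓝 0) := by
      have h1 : Tendsto (fun n => ‖xb (t - s (φ n)) - x t‖) atTop (𝓝 0) :=
        tendsto_iff_norm_sub_tendsto_zero.mp (hx2' t)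
      have h2 : Tendsto (fun n => ‖yb (t - s (φ n)) - y t‖) atTop (𝓝 0) :=
        tendsto_iff_norm_sub_tendsto_zero.mp (hy2' t)
      have h3 : Tendsto (fun n => ‖Ft (t - s (φ n)) (x t) (y t) - F t (x t) (y t)‖)
          atTop (𝓝 0) := tendsto_iff_norm_sub_tendsto_zero.mp (hF2 t (x t) (y t))
      have := ((hL2' t).mul (h1.add h2)).add h3
      simpa using this
    exact squeeze_zero (fun n => norm_nonneg _) hbound hb
end

section
/- Composition of asymptotically almost automorphic functions: Let F : ℝ × Y × Y → Y be continuous with decomposition F = G + I, where G : ℝ × Y × Y → Y is continuous and almost automorphic in its first variable and I : ℝ × Y × Y → Y is continuous with ‖I(s,x,y)‖ → 0 as s → +∞ uniformly for (x,y) in compact subsets of Y × Y. Suppose there is an almost automorphic function L_F : ℝ → [0,∞) such that both F and G satisfy ‖F(s,x₁,y₁) − F(s,x₂,y₂)‖ ≤ L_F(s)·(‖x₁−x₂‖ + ‖y₁−y₂‖) and ‖G(s,x₁,y₁) − G(s,x₂,y₂)‖ ≤ L_F(s)·(‖x₁−x₂‖ + ‖y₁−y₂‖) for all s ∈ ℝ,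 x_i, y_i ∈ Y. Then for any asymptotically almost automorphic functions x, y : ℝ → Y, the function Γ(s) = F(s, x(s), y(s)) is asymptotically almost automorphic. -/
/-!
Write `x = x₁ + p₁` and `y = y₁ + p₂` with `x₁, y₁` almost automorphic and `p₁, p₂ → 0`.
Along a subsequence common to `G`, `L_F`, `x₁` and `y₁`, the Lipschitz bound passes to the
limits `G̃, L̃` and lets one pass to the limit inside `G`, so `s ↦ G s (x₁ s) (y₁ s)` is almost
automorphic. The remainder `F(s, x, y) - G(s, x₁, y₁) = [F(s, x, y) - F(s, x₁, y₁)] + I(s, x₁, y₁)`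
vanishes at `+∞`: the first term because `L_F` is bounded, the second because `x₁` and `y₁`
take values in compact sets, on which `I` vanishes uniformly.
-/

open Filter Topology

open Set

section TranslationLimits

variable {Z W : Type*} [TopologicalSpace Z] [TopologicalSpace W]

def IsTranslationLimit (f fbar : ℝ → Z) (s : ℕ → ℝ) : Prop :=
  (∀ t, Tendsto (fun n => f (t + s n)) atTop (𝓝 (fbar t))) ∧
    ∀ t, Tendsto (fun n => fbar (t - s n)) atTop (𝓝 (f t))

def HasTranslationLimits (f : ℝ → Z) : Prop :=
  ∀ s : ℕ → ℝ, ∃ (φ : ℕ → ℕ) (fbar : ℝ → Z), StrictMono φ ∧ IsTranslationLimit f fbar (s ∘ φ)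

theorem IsTranslationLimit.comp_tendsto_atTop {f fbar : ℝ → Z} {s : ℕ → ℝ} {ψ : ℕ → ℕ}
    (h : IsTranslationLimit f fbar s) (hψ : Tendsto ψ atTop atTop) :
    IsTranslationLimit f fbar (s ∘ ψ) :=
  ⟨fun t => (h.1 t).comp hψ, fun t => (h.2 t).comp hψ⟩

theorem IsTranslationLimit.prodMk {f fbar : ℝ → Z} {g gbar : ℝ → W} {s : ℕ → ℝ}
    (hf : IsTranslationLimit f fbar s) (hg : IsTranslationLimit g gbar s) :
    IsTranslationLimit (fun t => (f t, g t)) (fun t => (fbar t, gbar t)) s :=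
  ⟨fun t => (hf.1 t).prodMk_nhds (hg.1 t), fun t => (hf.2 t).prodMk_nhds (hg.2 t)⟩

theorem IsTranslationLimit.fst {f : ℝ → Z} {g : ℝ → W} {h : ℝ → Z × W} {s : ℕ → ℝ}
    (hfg : IsTranslationLimit (fun t => (f t, g t)) h s) :
    IsTranslationLimit f (fun t => (h t).1) s :=
  ⟨fun t => (hfg.1 t).fst_nhds, fun t => (hfg.2 t).fst_nhds⟩

theorem IsTranslationLimit.snd {f : ℝ → Z} {g : ℝ → W} {h : ℝ → Z × W} {s : ℕ → ℝ}
    (hfg : IsTranslationLimit (fun t => (f t, g t)) h s) :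
    IsTranslationLimit g (fun t => (h t).2) s :=
  ⟨fun t => (hfg.1 t).snd_nhds, fun t => (hfg.2 t).snd_nhds⟩

theorem HasTranslationLimits.prodMk {f : ℝ → Z} {g : ℝ → W} (hf : HasTranslationLimits f)
    (hg : HasTranslationLimits g) : HasTranslationLimits fun t => (f t, g t) := by
  intro s
  obtain ⟨φ, fbar, hφ, hf⟩ := hf s
  obtain ⟨ψ, gbar, hψ, hg⟩ := hg (s ∘ φ)
  exact ⟨φ ∘ ψ, fun t => (fbar t, gbar t), hφ.comp hψ,
    (hf.comp_tendsto_atTop hψ.tendsto_atTop).prodMk hg⟩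

theorem HasTranslationLimits.isCompact_closure_range {Z : Type*} [PseudoMetricSpace Z]
    {f : ℝ → Z} (hf : HasTranslationLimits f) : IsCompact (closure (range f)) := by
  refine IsSeqCompact.isCompact fun u hu => ?_
  have happrox : ∀ n : ℕ, ∃ t, dist (u n) (f t) < 1 / (n + 1) := fun n =>
    Metric.mem_closure_range_iff.1 (hu n) _ Nat.one_div_pos_of_nat
  choose t ht using happrox
  obtain ⟨φ, fbar, hφ, hlim, -⟩ := hf t
  have hfφ : Tendsto (fun n => f (t (φ n))) atTop (𝓝 (fbar 0)) := by
    simpa using hlim 0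
  have hdist : Tendsto (fun n => dist (f (t n)) (u n)) atTop (𝓝 0) :=
    squeeze_zero (fun _ => dist_nonneg) (fun n => (dist_comm _ _).le.trans (ht n).le)
      tendsto_one_div_add_atTop_nhds_zero_nat
  exact ⟨fbar 0, mem_closure_of_tendsto hfφ (.of_forall fun n => mem_range_self _), φ, hφ,
    hfφ.congr_dist (hdist.comp hφ.tendsto_atTop)⟩

end TranslationLimits

theorem AlmostAutomorphic.hasTranslationLimits {Y : Type*} [NormedAddCommGroup Y] {f : ℝ → Y}
    (hf : AlmostAutomorphic f) : HasTranslationLimits f :=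
  hf.2

theorem AlmostAutomorphicIn1.hasTranslationLimits {Y : Type*} [NormedAddCommGroup Y]
    {G : ℝ → Y → Y → Y} (hG : AlmostAutomorphicIn1 G) : HasTranslationLimits G := by
  intro s
  obtain ⟨φ, Gt, hφ, h₁, h₂⟩ := hG s
  exact ⟨φ, Gt, hφ, fun t => tendsto_pi_nhds.2 fun x => tendsto_pi_nhds.2 (h₁ t x),
    fun t => tendsto_pi_nhds.2 fun x => tendsto_pi_nhds.2 (h₂ t x)⟩

section Normed

variable {ι X Y Z : Type*} [SeminormedAddCommGroup X] [SeminormedAddCommGroup Y]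
  [SeminormedAddCommGroup Z] {l : Filter ι}

def LipschitzL1With (L : ℝ) (H : X → Y → Z) : Prop :=
  ∀ (x₁ x₂ : X) (y₁ y₂ : Y), ‖H x₁ y₁ - H x₂ y₂‖ ≤ L * (‖x₁ - x₂‖ + ‖y₁ - y₂‖)

theorem LipschitzL1With.of_tendsto [l.NeBot] {H : ι → X → Y → Z} {H' : X → Y → Z}
    {L : ι → ℝ} {L' : ℝ} (hH : Tendsto H l (𝓝 H')) (hL : Tendsto L l (𝓝 L'))
    (hlip : ∀ i, LipschitzL1With (L i) (H i)) : LipschitzL1With L' H' := fun x₁ x₂ y₁ y₂ =>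
  le_of_tendsto_of_tendsto' ((((hH.apply_nhds x₁).apply_nhds y₁).sub
    ((hH.apply_nhds x₂).apply_nhds y₂)).norm) (hL.mul_const _) fun i => hlip i _ _ _ _

theorem tendsto_apply_apply_of_lipschitzL1With {H : ι → X → Y → Z} {H' : X → Y → Z}
    {L : ι → ℝ} {L' : ℝ} {x : ι → X} {x' : X} {y : ι → Y} {y' : Y}
    (hH : Tendsto H l (𝓝 H')) (hL : Tendsto L l (𝓝 L')) (hlip : ∀ i, LipschitzL1With (L i) (H i))
    (hx : Tendsto x l (𝓝 x')) (hy : Tendsto y l (𝓝 y')) :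
    Tendsto (fun i => H i (x i) (y i)) l (𝓝 (H' x' y')) := by
  rw [tendsto_iff_norm_sub_tendsto_zero] at hx hy ⊢
  have hbound : ∀ i, ‖H i (x i) (y i) - H' x' y'‖ ≤
      L i * (‖x i - x'‖ + ‖y i - y'‖) + ‖H i x' y' - H' x' y'‖ := fun i =>
    (norm_sub_le_norm_sub_add_norm_sub _ (H i x' y') _).trans
      (add_le_add_left (hlip i _ _ _ _) _)
  have hH' := tendsto_iff_norm_sub_tendsto_zero.1 ((hH.apply_nhds x').apply_nhds y')
  exact squeeze_zero (fun _ => norm_nonneg _) hbound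
    (by simpa using (hL.mul (hx.add hy)).add hH')

theorem tendsto_apply_sub_apply_of_lipschitzL1With {H : ι → X → Y → Z} {L : ι → ℝ}
    (hlip : ∀ i, LipschitzL1With (L i) (H i)) (hL : BddAbove (range L))
    {x x' : ι → X} {y y' : ι → Y} (hx : Tendsto (fun i => x i - x' i) l (𝓝 0))
    (hy : Tendsto (fun i => y i - y' i) l (𝓝 0)) :
    Tendsto (fun i => H i (x i) (y i) - H i (x' i) (y' i)) l (𝓝 0) := by
  obtain ⟨M, hM⟩ := hL
  refine squeeze_zero_norm (fun i => (hlip i _ _ _ _).trans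
    (mul_le_mul_of_nonneg_right (hM (mem_range_self i)) (by positivity))) ?_
  simpa using (hx.norm.add hy.norm).const_mul M

end Normed

theorem tendsto_apply_zero_of_forall_norm_le {X Y Z : Type*} [SeminormedAddCommGroup Z]
    {I : ℝ → X → Y → Z} {K : Set (X × Y)}
    (hI : ∀ ε > 0, ∃ s₀ : ℝ, ∀ s ≥ s₀, ∀ p ∈ K, ‖I s p.1 p.2‖ ≤ ε) {x : ℝ → X} {y : ℝ → Y}
    (hxy : ∀ s, (x s, y s) ∈ K) : Tendsto (fun s => I s (x s) (y s)) atTop (𝓝 0) := by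
  refine NormedAddGroup.tendsto_nhds_zero.2 fun ε hε => ?_
  obtain ⟨s₀, hs₀⟩ := hI (ε / 2) (half_pos hε)
  filter_upwards [eventually_ge_atTop s₀] with s hs
  exact (hs₀ s hs _ (hxy s)).trans_lt (half_lt_self hε)

section Composition

variable {Y : Type*} [NormedAddCommGroup Y]

theorem IsTranslationLimit.comp_lipschitzL1With {G Gt : ℝ → Y → Y → Y} {L Lt : ℝ → ℝ}
    {x xt y yt : ℝ → Y} {s : ℕ → ℝ} (hG : IsTranslationLimit G Gt s)
    (hL : IsTranslationLimit L Lt s) (hx : IsTranslationLimit x xt s)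
    (hy : IsTranslationLimit y yt s) (hlip : ∀ t, LipschitzL1With (L t) (G t)) :
    IsTranslationLimit (fun t => G t (x t) (y t)) (fun t => Gt t (xt t) (yt t)) s := by
  -- the backward limits need the Lipschitz bound for `Gt`, which `G` passes on in the limit
  have hlipt : ∀ t, LipschitzL1With (Lt t) (Gt t) := fun t =>
    .of_tendsto (hG.1 t) (hL.1 t) fun _ => hlip _
  exact ⟨fun t => tendsto_apply_apply_of_lipschitzL1With (hG.1 t) (hL.1 t) (fun _ => hlip _)
      (hx.1 t) (hy.1 t),
    fun t => tendsto_apply_apply_of_lipschitzL1With (hG.2 t) (hL.2 t) (fun _ => hlipt _)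
      (hx.2 t) (hy.2 t)⟩

theorem AlmostAutomorphicIn1.comp {G : ℝ → Y → Y → Y} {L : ℝ → ℝ} {x y : ℝ → Y}
    (hG : AlmostAutomorphicIn1 G) (hGcont : Continuous fun p : ℝ × Y × Y => G p.1 p.2.1 p.2.2)
    (hL : HasTranslationLimits L) (hlip : ∀ t, LipschitzL1With (L t) (G t))
    (hx : AlmostAutomorphic x) (hy : AlmostAutomorphic y) :
    AlmostAutomorphic fun t => G t (x t) (y t) := by
  refine ⟨hGcont.comp (continuous_id.prodMk (hx.1.prodMk hy.1)), fun s => ?_⟩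
  obtain ⟨φ, h, hφ, hlim⟩ := (hG.hasTranslationLimits.prodMk hL).prodMk
    (hx.hasTranslationLimits.prodMk hy.hasTranslationLimits) s
  exact ⟨φ, _, hφ, hlim.fst.fst.comp_lipschitzL1With hlim.fst.snd hlim.snd.fst hlim.snd.snd hlip⟩

end Composition

theorem asymptoticallyAlmostAutomorphic_comp_general
    {Y : Type*} [NormedAddCommGroup Y]
    (F G I : ℝ → Y → Y → Y)
    (hFcont : Continuous fun p : ℝ × Y × Y => F p.1 p.2.1 p.2.2)
    (hGcont : Continuous fun p : ℝ × Y × Y => G p.1 p.2.1 p.2.2)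
    (hdecomp : ∀ (s : ℝ) (x y : Y), F s x y = G s x y + I s x y)
    (hGaa : AlmostAutomorphicIn1 G)
    (hIvanish : ∀ K : Set (Y × Y), IsCompact K → ∀ ε > 0, ∃ s₀ : ℝ,
      ∀ s ≥ s₀, ∀ p ∈ K, ‖I s p.1 p.2‖ ≤ ε)
    (LF : ℝ → ℝ) (hLFaa : AlmostAutomorphic LF)
    (hFlip : ∀ (s : ℝ) (x₁ x₂ y₁ y₂ : Y),
      ‖F s x₁ y₁ - F s x₂ y₂‖ ≤ LF s * (‖x₁ - x₂‖ + ‖y₁ - y₂‖))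
    (hGlip : ∀ (s : ℝ) (x₁ x₂ y₁ y₂ : Y),
      ‖G s x₁ y₁ - G s x₂ y₂‖ ≤ LF s * (‖x₁ - x₂‖ + ‖y₁ - y₂‖))
    (x y : ℝ → Y)
    (hx : AsymptoticallyAlmostAutomorphic x) (hy : AsymptoticallyAlmostAutomorphic y) :
    AsymptoticallyAlmostAutomorphic (fun s => F s (x s) (y s)) := by
  obtain ⟨x₁, p₁, hx₁, hp₁c, hp₁, hx⟩ := hx
  obtain ⟨y₁, p₂, hy₁, hp₂c, hp₂, hy⟩ := hy
  obtain rfl : x = x₁ + p₁ := funext hx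
  obtain rfl : y = y₁ + p₂ := funext hy
  have hIx₁y₁ : Tendsto (fun s => I s (x₁ s) (y₁ s)) atTop (𝓝 0) :=
    tendsto_apply_zero_of_forall_norm_le (hIvanish _
      (hx₁.hasTranslationLimits.isCompact_closure_range.prod
        hy₁.hasTranslationLimits.isCompact_closure_range))
      fun s => ⟨subset_closure (mem_range_self s), subset_closure (mem_range_self s)⟩
  have hFsub : Tendsto (fun s => F s ((x₁ + p₁) s) ((y₁ + p₂) s) - F s (x₁ s) (y₁ s))
      atTop (𝓝 0) :=
    tendsto_apply_sub_apply_of_lipschitzL1With hFlip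
      (hLFaa.hasTranslationLimits.isCompact_closure_range.bddAbove.mono subset_closure)
      (by simpa using tendsto_zero_iff_norm_tendsto_zero.2 hp₁)
      (by simpa using tendsto_zero_iff_norm_tendsto_zero.2 hp₂)
  refine ⟨fun s => G s (x₁ s) (y₁ s),
    fun s => F s ((x₁ + p₁) s) ((y₁ + p₂) s) - G s (x₁ s) (y₁ s),
    hGaa.comp hGcont hLFaa.hasTranslationLimits hGlip hx₁ hy₁, ?_, ?_,
    fun s => (add_sub_cancel _ _).symm⟩
  · exact (hFcont.comp (continuous_id.prodMk ((hx₁.1.add hp₁c).prodMk (hy₁.1.add hp₂c)))).sub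
      (hGcont.comp (continuous_id.prodMk (hx₁.1.prodMk hy₁.1)))
  · rw [← tendsto_zero_iff_norm_tendsto_zero]
    refine (add_zero (0 : Y) ▸ hFsub.add hIx₁y₁).congr fun s => ?_
    rw [hdecomp s (x₁ s) (y₁ s)]
    abel

/-- Composition of asymptotically almost automorphic functions: if `F = G + I` where `G` is
continuous and almost automorphic in its first variable, `I` is continuous and vanishes at
`+∞` uniformly on compact subsets of `Y × Y`, and both `F` and `G` are Lipschitz in the last
two variables with almost automorphic nonnegative coefficient `L_F`, then for asymptotically
almost automorphic `x, y : ℝ → Y` the function `s ↦ F s (x s) (y s)` is asymptotically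
almost automorphic. -/
theorem asymptoticallyAlmostAutomorphic_comp
    {Y : Type*} [NormedAddCommGroup Y] [NormedSpace ℝ Y] [CompleteSpace Y]
    (F G I : ℝ → Y → Y → Y)
    (hFcont : Continuous fun p : ℝ × Y × Y => F p.1 p.2.1 p.2.2)
    (hGcont : Continuous fun p : ℝ × Y × Y => G p.1 p.2.1 p.2.2)
    (hIcont : Continuous fun p : ℝ × Y × Y => I p.1 p.2.1 p.2.2)
    (hdecomp : ∀ (s : ℝ) (x y : Y), F s x y = G s x y + I s x y)
    (hGaa : AlmostAutomorphicIn1 G)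
    (hIvanish : ∀ K : Set (Y × Y), IsCompact K → ∀ ε > 0, ∃ s₀ : ℝ,
      ∀ s ≥ s₀, ∀ p ∈ K, ‖I s p.1 p.2‖ ≤ ε)
    (LF : ℝ → ℝ) (hLF0 : ∀ s, 0 ≤ LF s) (hLFaa : AlmostAutomorphic LF)
    (hFlip : ∀ (s : ℝ) (x₁ x₂ y₁ y₂ : Y),
      ‖F s x₁ y₁ - F s x₂ y₂‖ ≤ LF s * (‖x₁ - x₂‖ + ‖y₁ - y₂‖))
    (hGlip : ∀ (s : ℝ) (x₁ x₂ y₁ y₂ : Y),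
      ‖G s x₁ y₁ - G s x₂ y₂‖ ≤ LF s * (‖x₁ - x₂‖ + ‖y₁ - y₂‖))
    (x y : ℝ → Y)
    (hx : AsymptoticallyAlmostAutomorphic x) (hy : AsymptoticallyAlmostAutomorphic y) :
    AsymptoticallyAlmostAutomorphic (fun s => F s (x s) (y s)) :=
  asymptoticallyAlmostAutomorphic_comp_general F G I hFcont hGcont hdecomp hGaa hIvanish LF hLFaa
    hFlip hGlip x y hx hy
end

section
/- Convolution with an exponentially stable semigroup preserves almost automorphy: Let (T(t))_{t≥0} be an exponentially stable C₀-semigroup on Y with constants M ≥ 1 and α > 0, and let g : ℝ → Y be almost automorphic. Then for every s ∈ ℝ the Bochner integral Λ(s) = ∫_{−∞}^s T(s−t) g(t) dt converges absolutely, and the function Λ : ℝ → Y is almost automorphic. -/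
/-!
After the substitution `t ↦ s - t`, `Λ s = ∫_0^∞ T t (g (s - t)) dt`. An almost automorphic
function is bounded, say by `C`, so the integrand is dominated by `M C e^{-α t}`. Given a sequence,
take the subsequence and the function `ḡ` that almost automorphy of `g` provides; then
`Λ̄ s = ∫_0^∞ T t (ḡ (s - t)) dt` works for `Λ`, both limits (and the continuity of `Λ`) following
from dominated convergence because every `T t` is continuous. Measurability of the integrands
comes from the joint continuity of `(t, x) ↦ T t x`, valid for any strongly continuous, uniformly
bounded family.
-/

open Filter Topology MeasureTheory Set

theorem AlmostAutomorphic.exists_norm_le {Y : Type*} [NormedAddCommGroup Y] {f : ℝ → Y}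
    (hf : AlmostAutomorphic f) : ∃ C, ∀ t, ‖f t‖ ≤ C := by
  by_contra! h
  choose u hu using fun n : ℕ => h n
  obtain ⟨φ, fbar, hφ, hlim, -⟩ := hf.2 u
  have hconv : Tendsto (fun n => ‖f (u (φ n))‖) atTop (𝓝 ‖fbar 0‖) := by
    simpa only [zero_add] using (hlim 0).norm
  refine not_tendsto_atTop_of_tendsto_nhds hconv
    (tendsto_atTop_mono (fun n => (hu (φ n)).le) ?_)
  exact tendsto_natCast_atTop_atTop.comp hφ.tendsto_atTop

theorem continuous_apply_of_forall_norm_le {X 𝕜 E F : Type*} [TopologicalSpace X]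
    [NontriviallyNormedField 𝕜] [SeminormedAddCommGroup E] [NormedSpace 𝕜 E]
    [SeminormedAddCommGroup F] [NormedSpace 𝕜 F] {T : X → E →L[𝕜] F} {K : ℝ}
    (hT : ∀ x, Continuous fun t => T t x) (hK : ∀ t, ‖T t‖ ≤ K) :
    Continuous fun p : X × E => T p.1 p.2 := by
  refine continuous_iff_continuousAt.2 fun ⟨t₀, x₀⟩ => ?_
  rw [ContinuousAt, tendsto_iff_norm_sub_tendsto_zero]
  have hsplit : ∀ p : X × E, T p.1 p.2 - T t₀ x₀ = T p.1 (p.2 - x₀) + (T p.1 x₀ - T t₀ x₀) :=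
    fun p => by rw [map_sub]; abel
  have hbound : Tendsto (fun p : X × E => K * ‖p.2 - x₀‖ + ‖T p.1 x₀ - T t₀ x₀‖)
      (𝓝 (t₀, x₀)) (𝓝 0) := by
    have hTx₀ := hT x₀
    exact Continuous.tendsto' (by fun_prop) _ _ (by simp)
  refine squeeze_zero (fun _ => norm_nonneg _) (fun p => ?_) hbound
  rw [hsplit]
  exact (norm_add_le _ _).trans (add_le_add_left ((T p.1).le_of_opNorm_le (hK p.1) _) _)

theorem integrableOn_Iic_iff_comp_sub {E : Type*} [NormedAddCommGroup E] {f : ℝ → E} (s : ℝ) :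
    IntegrableOn f (Iic s) ↔ IntegrableOn (fun t => f (s - t)) (Ici 0) := by
  have hpre : (fun t => s - t) ⁻¹' Iic s = Ici 0 := by ext t; simp
  rw [← hpre]
  exact ((volume.measurePreserving_sub_left s).integrableOn_comp_preimage
    (measurableEmbedding_subLeft s)).symm

theorem setIntegral_Iic_eq_comp_sub {E : Type*} [NormedAddCommGroup E] [NormedSpace ℝ E]
    (f : ℝ → E) (s : ℝ) : ∫ t in Iic s, f t = ∫ t in Ici 0, f (s - t) := by
  have hpre : (fun t => s - t) ⁻¹' Iic s = Ici 0 := by ext t; simp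
  rw [← hpre, (volume.measurePreserving_sub_left s).setIntegral_preimage_emb
    (measurableEmbedding_subLeft s)]

section ExpDecay

variable {E F : Type*} [NormedAddCommGroup E] [NormedSpace ℝ E] [NormedAddCommGroup F]
  [NormedSpace ℝ F] {T : ℝ → E →L[ℝ] F} {M α C : ℝ}

theorem norm_le_of_norm_le_mul_exp (hα : 0 ≤ α)
    (hT : ∀ t ≥ (0 : ℝ), ‖T t‖ ≤ M * Real.exp (-α * t)) {t : ℝ} (ht : 0 ≤ t) : ‖T t‖ ≤ M := by
  have hM : 0 ≤ M := by simpa using (norm_nonneg _).trans (hT 0 le_rfl)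
  calc ‖T t‖ ≤ M * Real.exp (-α * t) := hT t ht
    _ ≤ M * 1 := by gcongr; exact Real.exp_le_one_iff.2 (by nlinarith)
    _ = M := mul_one M

theorem norm_apply_le_mul_exp (hT : ∀ t ≥ (0 : ℝ), ‖T t‖ ≤ M * Real.exp (-α * t)) {t : ℝ}
    (ht : 0 ≤ t) {x : E} (hx : ‖x‖ ≤ C) : ‖T t x‖ ≤ M * Real.exp (-α * t) * C :=
  ((T t).le_of_opNorm_le (hT t ht) x).trans
    (mul_le_mul_of_nonneg_left hx ((norm_nonneg _).trans (hT t ht)))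

theorem integrableOn_Ici_mul_exp_neg_mul (hα : 0 < α) (M C : ℝ) :
    IntegrableOn (fun t => M * Real.exp (-α * t) * C) (Ici 0) :=
  ((Iff.mpr integrableOn_Ici_iff_integrableOn_Ioi (exp_neg_integrableOn_Ioi 0 hα)).const_mul
    M).mul_const C

theorem aestronglyMeasurable_restrict_Ici_apply {μ : Measure ℝ} {K : ℝ}
    (hTcont : ∀ x, ContinuousOn (fun t => T t x) (Ici 0)) (hK : ∀ t ≥ (0 : ℝ), ‖T t‖ ≤ K)
    {w : ℝ → E} (hw : AEStronglyMeasurable w (μ.restrict (Ici 0))) :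
    AEStronglyMeasurable (fun t => T t (w t)) (μ.restrict (Ici 0)) := by
  -- extended by `T 0` on `(-∞, 0)`, the family becomes jointly continuous on all of `ℝ × E`
  have hjoint : Continuous fun p : ℝ × E => T (max p.1 0) p.2 :=
    continuous_apply_of_forall_norm_le (T := fun t => T (max t 0))
      (fun x => (hTcont x).comp_continuous (continuous_id.max continuous_const)
        fun t => le_max_right t 0)
      fun t => hK _ (le_max_right t 0)
  refine (hjoint.comp_aestronglyMeasurable₂ (g := fun t x => T (max t 0) x)
    aestronglyMeasurable_id hw).congr ?_
  filter_upwards [ae_restrict_mem measurableSet_Ici] with t ht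
  rw [id, max_eq_left ht]

theorem integrableOn_Ici_apply (hα : 0 < α)
    (hTcont : ∀ x, ContinuousOn (fun t => T t x) (Ici 0))
    (hT : ∀ t ≥ (0 : ℝ), ‖T t‖ ≤ M * Real.exp (-α * t))
    {w : ℝ → E} (hw : AEStronglyMeasurable w (volume.restrict (Ici 0))) (hC : ∀ t, ‖w t‖ ≤ C) :
    IntegrableOn (fun t => T t (w t)) (Ici 0) := by
  have hK := fun t => norm_le_of_norm_le_mul_exp (t := t) hα.le hT
  refine (integrableOn_Ici_mul_exp_neg_mul hα M C).mono'
    (aestronglyMeasurable_restrict_Ici_apply hTcont hK hw) ?_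
  filter_upwards [ae_restrict_mem measurableSet_Ici] with t ht
  exact norm_apply_le_mul_exp hT ht (hC t)

theorem tendsto_setIntegral_Ici_apply (hα : 0 < α)
    (hTcont : ∀ x, ContinuousOn (fun t => T t x) (Ici 0))
    (hT : ∀ t ≥ (0 : ℝ), ‖T t‖ ≤ M * Real.exp (-α * t))
    {w : ℕ → ℝ → E} {v : ℝ → E} (hw : ∀ n, AEStronglyMeasurable (w n) (volume.restrict (Ici 0)))
    (hC : ∀ n t, ‖w n t‖ ≤ C) (hlim : ∀ t, Tendsto (fun n => w n t) atTop (𝓝 (v t))) :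
    Tendsto (fun n => ∫ t in Ici 0, T t (w n t)) atTop (𝓝 (∫ t in Ici 0, T t (v t))) := by
  have hK := fun t => norm_le_of_norm_le_mul_exp (t := t) hα.le hT
  refine tendsto_integral_of_dominated_convergence _
    (fun n => aestronglyMeasurable_restrict_Ici_apply hTcont hK (hw n))
    (integrableOn_Ici_mul_exp_neg_mul hα M C) (fun n => ?_)
    (ae_of_all _ fun t => ((T t).continuous.tendsto _).comp (hlim t))
  filter_upwards [ae_restrict_mem measurableSet_Ici] with t ht
  exact norm_apply_le_mul_exp hT ht (hC n t)

theorem continuous_setIntegral_Ici_apply_sub (hα : 0 < α)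
    (hTcont : ∀ x, ContinuousOn (fun t => T t x) (Ici 0))
    (hT : ∀ t ≥ (0 : ℝ), ‖T t‖ ≤ M * Real.exp (-α * t))
    {u : ℝ → E} (hu : Continuous u) (hC : ∀ t, ‖u t‖ ≤ C) :
    Continuous fun s => ∫ t in Ici 0, T t (u (s - t)) :=
  continuous_iff_seqContinuous.2 fun _ _ hx =>
    tendsto_setIntegral_Ici_apply hα hTcont hT
      (fun _ => (hu.comp (continuous_sub_left _)).aestronglyMeasurable) (fun _ _ => hC _)
      fun t => (hu.tendsto _).comp (hx.sub_const t)

end ExpDecay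

theorem convolution_semigroup_almostAutomorphic_general
    {Y : Type*} [NormedAddCommGroup Y] [NormedSpace ℝ Y]
    (T : ℝ → Y →L[ℝ] Y) (M α : ℝ) (hα : 0 < α)
    (hTcont : ∀ x : Y, ContinuousOn (fun t => T t x) (Set.Ici (0 : ℝ)))
    (hTbound : ∀ t ≥ (0 : ℝ), ‖T t‖ ≤ M * Real.exp (-α * t))
    (g : ℝ → Y) (hg : AlmostAutomorphic g) :
    (∀ s : ℝ, IntegrableOn (fun t => T (s - t) (g t)) (Set.Iic s)) ∧
    AlmostAutomorphic (fun s => ∫ t in Set.Iic s, T (s - t) (g t)) := by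
  obtain ⟨C, hC⟩ := hg.exists_norm_le
  have hg_meas : ∀ c, AEStronglyMeasurable (fun t => g (c - t)) (volume.restrict (Ici 0)) :=
    fun c => (hg.1.comp (continuous_sub_left c)).aestronglyMeasurable
  refine ⟨fun s => (integrableOn_Iic_iff_comp_sub s).2 ?_, ?_⟩
  · simpa only [sub_sub_cancel] using
      integrableOn_Ici_apply hα hTcont hTbound (hg_meas s) fun t => hC _
  simp only [setIntegral_Iic_eq_comp_sub _ (_ : ℝ), sub_sub_cancel]
  refine ⟨continuous_setIntegral_Ici_apply_sub hα hTcont hTbound hg.1 hC, fun σ => ?_⟩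
  obtain ⟨φ, gbar, hφ, hg_gbar, hgbar_g⟩ := hg.2 σ
  have hgbar_meas : StronglyMeasurable gbar := stronglyMeasurable_of_tendsto atTop
    (fun n => (hg.1.comp (continuous_add_const _)).stronglyMeasurable) (tendsto_pi_nhds.2 hg_gbar)
  have hgbar_le : ∀ t, ‖gbar t‖ ≤ C := fun t => le_of_tendsto' (hg_gbar t).norm fun n => hC _
  refine ⟨φ, fun s => ∫ t in Ici 0, T t (gbar (s - t)), hφ, fun s => ?_, fun s => ?_⟩
  · refine tendsto_setIntegral_Ici_apply hα hTcont hTbound (fun n => hg_meas _)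
      (fun n t => hC _) fun t => ?_
    simpa only [sub_add_eq_add_sub] using hg_gbar (s - t)
  · refine tendsto_setIntegral_Ici_apply hα hTcont hTbound
      (fun n => (hgbar_meas.comp_measurable
        (continuous_sub_left _).measurable).aestronglyMeasurable)
      (fun n t => hgbar_le _) fun t => ?_
    simpa only [sub_right_comm] using hgbar_g (s - t)

/-- Convolution with an exponentially stable `C₀`-semigroup preserves almost automorphy:
if `‖T t‖ ≤ M e^{-α t}` for `t ≥ 0` and `g` is almost automorphic, then
`Λ s = ∫_{-∞}^s T (s - t) (g t) dt` converges absolutely for every `s` and `Λ` is almost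
automorphic. -/
theorem convolution_semigroup_almostAutomorphic
    {Y : Type*} [NormedAddCommGroup Y] [NormedSpace ℝ Y] [CompleteSpace Y]
    (T : ℝ → Y →L[ℝ] Y) (M α : ℝ) (hM : 1 ≤ M) (hα : 0 < α)
    (hT0 : T 0 = ContinuousLinearMap.id ℝ Y)
    (hTadd : ∀ t ≥ (0 : ℝ), ∀ s ≥ (0 : ℝ), T (t + s) = (T t).comp (T s))
    (hTcont : ∀ x : Y, ContinuousOn (fun t => T t x) (Set.Ici (0 : ℝ)))
    (hTbound : ∀ t ≥ (0 : ℝ), ‖T t‖ ≤ M * Real.exp (-α * t))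
    (g : ℝ → Y) (hg : AlmostAutomorphic g) :
    (∀ s : ℝ, IntegrableOn (fun t => T (s - t) (g t)) (Set.Iic s)) ∧
    AlmostAutomorphic (fun s => ∫ t in Set.Iic s, T (s - t) (g t)) :=
  convolution_semigroup_almostAutomorphic_general T M α hα hTcont hTbound g hg
end

section
/- Lipschitz estimate for the whole-line solution operator: Under the hypotheses — (T(t))_{t≥0} an exponentially stable C₀-semigroup on Y with constants M ≥ 1, α > 0; F : ℝ × Y × Y → Y continuous with ‖F(s,x₁,y₁) − F(s,x₂,y₂)‖ ≤ L_F(s)·(‖x₁−x₂‖ + ‖y₁−y₂‖) for a bounded L_F : ℝ → [0,∞) with L_F* = sup L_F; H : ℝ × ℝ × Y → Y continuous with ‖H(t,s,y₁) − H(t,s,y₂)‖ ≤ L_H(s)·‖y₁−y₂‖ for a continuous L_H : ℝ → [0,∞) with L_H¹* := sup_{t∈ℝ} ∫_{−∞}^t L_H(τ) dτ < ∞; and for every bounded continuous u : ℝ → Y and t ∈ ℝ the map τ ↦ H(t,τ,u(τ)) is Bochner integrable on (−∞,t] — define, for bounded continuous u : ℝ → Y, Υ(u)(s) = ∫_{−∞}^s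 T(s−t)·F( t, u(t), ∫_{−∞}^t H(t,τ,u(τ)) dτ ) dt. Then for all bounded continuous y₁, y₂ : ℝ → Y and all s ∈ ℝ, ‖Υ(y₂)(s) − Υ(y₁)(s)‖ ≤ (M/α)·L_F*·(1 + L_H¹*)·sup_{t∈ℝ} ‖y₂(t) − y₁(t)‖. -/
/-!
The nonlinear terms differ pointwise by at most `L_F* (1 + L_H¹*) ‖y₂ - y₁‖_∞`: the inner
integrals differ by at most `∫_{-∞}^t L_H · ‖y₂ - y₁‖_∞ ≤ L_H¹* ‖y₂ - y₁‖_∞`. Pushing this bound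
through the semigroup costs `∫_{-∞}^s M e^{-α(s-t)} dt = M / α`.
-/

open Filter Topology MeasureTheory Set

lemma integral_exp_neg_mul_sub_Iic {α : ℝ} (hα : 0 < α) (s : ℝ) :
    ∫ t in Iic s, Real.exp (-α * (s - t)) = α⁻¹ := by
  have hsplit : ∀ t, Real.exp (-α * (s - t)) = Real.exp (-α * s) * Real.exp (α * t) := by
    intro t; rw [← Real.exp_add]; ring_nf
  simp_rw [hsplit, integral_const_mul, integral_exp_mul_Iic hα, mul_div_assoc', ← Real.exp_add]
  simp

lemma integrableOn_exp_neg_mul_sub_Iic {α : ℝ} (hα : 0 < α) (s : ℝ) :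
    IntegrableOn (fun t => Real.exp (-α * (s - t))) (Iic s) :=
  IntegrableOn.congr_fun ((integrableOn_exp_mul_Iic hα s).const_mul (Real.exp (-α * s)))
    (fun t _ => by rw [← Real.exp_add]; ring_nf) measurableSet_Iic

/-- Neither integral needs to exist: since `f - g` is integrable, either both are or both are
junk `0`. -/
lemma norm_integral_sub_integral_le {α E : Type*} [MeasurableSpace α] {μ : Measure α}
    [NormedAddCommGroup E] [NormedSpace ℝ E] {f g : α → E} {b : α → ℝ}
    (hf : AEStronglyMeasurable f μ) (hg : AEStronglyMeasurable g μ) (hb : Integrable b μ)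
    (hfg : ∀ᵐ x ∂μ, ‖f x - g x‖ ≤ b x) :
    ‖∫ x, f x ∂μ - ∫ x, g x ∂μ‖ ≤ ∫ x, b x ∂μ := by
  have hdiff : Integrable (f - g) μ := hb.mono' (hf.sub hg) hfg
  by_cases hgi : Integrable g μ
  · have hfi : Integrable f μ := by simpa using hdiff.add hgi
    rw [← integral_sub hfi hgi]
    exact norm_integral_le_of_norm_le hb hfg
  · have hfi : ¬ Integrable f μ := fun hfi => hgi (by simpa using hfi.sub hdiff)
    rw [integral_undef hfi, integral_undef hgi, sub_zero, norm_zero]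
    exact integral_nonneg_of_ae (hfg.mono fun x hx => (norm_nonneg _).trans hx)

/-- No separability of `E` is needed: `g` is approximated by simple functions, on whose finitely
many level sets the map is `a ↦ T (φ a) c`. -/
lemma stronglyMeasurable_clm_apply_of_continuous {α 𝕜 E F : Type*} [MeasurableSpace α]
    [NontriviallyNormedField 𝕜] [NormedAddCommGroup E] [NormedSpace 𝕜 E]
    [NormedAddCommGroup F] [NormedSpace 𝕜 F]
    {T : ℝ → E →L[𝕜] F} (hT : ∀ x, Continuous fun t => T t x)
    {φ : α → ℝ} (hφ : Measurable φ) {g : α → E} (hg : StronglyMeasurable g) :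
    StronglyMeasurable fun a => T (φ a) (g a) := by
  have hsimple : ∀ f : SimpleFunc α E, StronglyMeasurable fun a => T (φ a) (f a) := by
    classical
    intro f
    induction f with
    | const c => exact (hT c).stronglyMeasurable.comp_measurable hφ
    | @pcw f₁ f₂ s hs h₁ h₂ =>
      have hpcw : (fun a => T (φ a) (f₁.piecewise s hs f₂ a))
          = s.piecewise (fun a => T (φ a) (f₁ a)) (fun a => T (φ a) (f₂ a)) :=
        funext fun a => by by_cases ha : a ∈ s <;> simp [ha]
      exact hpcw ▸ h₁.piecewise hs h₂
  exact stronglyMeasurable_of_tendsto atTop (fun n => hsimple (hg.approx n))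
    (tendsto_pi_nhds.2 fun a => ((T (φ a)).continuous.tendsto _).comp (hg.tendsto_approx a))

lemma stronglyMeasurable_setIntegral_Iic {E : Type*} [NormedAddCommGroup E] [NormedSpace ℝ E]
    {μ : Measure ℝ} [SFinite μ] {f : ℝ → ℝ → E}
    (hf : StronglyMeasurable (Function.uncurry f)) :
    StronglyMeasurable fun t => ∫ τ in Iic t, f t τ ∂μ := by
  have hind : StronglyMeasurable ({p : ℝ × ℝ | p.2 ≤ p.1}.indicator (Function.uncurry f)) :=
    hf.indicator (measurableSet_le measurable_snd measurable_fst)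
  convert hind.integral_prod_right' (ν := μ) using 1
  ext t
  rw [← integral_indicator measurableSet_Iic]
  congr 1 with τ

section Semigroup

variable {E F : Type*} [NormedAddCommGroup E] [NormedSpace ℝ E]
  [NormedAddCommGroup F] [NormedSpace ℝ F] {T : ℝ → E →L[ℝ] F}

lemma aestronglyMeasurable_apply_sub_Iic (hT : ∀ x, ContinuousOn (fun t => T t x) (Ici 0))
    {g : ℝ → E} (hg : StronglyMeasurable g) (s : ℝ) :
    AEStronglyMeasurable (fun t => T (s - t) (g t)) (volume.restrict (Iic s)) := by
  have hT' : ∀ x, Continuous fun t => T (max t 0) x := fun x =>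
    (hT x).comp_continuous (continuous_id.max continuous_const) fun t => le_max_right t 0
  refine (stronglyMeasurable_clm_apply_of_continuous hT' (φ := fun t => s - t)
    (measurable_const.sub measurable_id) hg).aestronglyMeasurable.congr ?_
  filter_upwards [ae_restrict_mem measurableSet_Iic] with t ht
  rw [max_eq_left (sub_nonneg.2 ht)]

lemma norm_integral_apply_sub_Iic_sub_le {M α : ℝ} (hα : 0 < α)
    (hT : ∀ x, ContinuousOn (fun t => T t x) (Ici 0))
    (hTbound : ∀ t ≥ (0 : ℝ), ‖T t‖ ≤ M * Real.exp (-α * t))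
    {g₁ g₂ : ℝ → E} (hg₁ : StronglyMeasurable g₁) (hg₂ : StronglyMeasurable g₂) {C : ℝ}
    (hC : ∀ t, ‖g₂ t - g₁ t‖ ≤ C) (s : ℝ) :
    ‖(∫ t in Iic s, T (s - t) (g₂ t)) - ∫ t in Iic s, T (s - t) (g₁ t)‖ ≤ M / α * C := by
  have hpointwise : ∀ t ∈ Iic s,
      ‖T (s - t) (g₂ t) - T (s - t) (g₁ t)‖ ≤ M * C * Real.exp (-α * (s - t)) := by
    intro t ht
    have hTt := hTbound (s - t) (sub_nonneg.2 ht)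
    calc ‖T (s - t) (g₂ t) - T (s - t) (g₁ t)‖
        = ‖T (s - t) (g₂ t - g₁ t)‖ := by rw [map_sub]
      _ ≤ ‖T (s - t)‖ * ‖g₂ t - g₁ t‖ := (T (s - t)).le_opNorm _
      _ ≤ M * Real.exp (-α * (s - t)) * C :=
        mul_le_mul hTt (hC t) (norm_nonneg _) ((norm_nonneg _).trans hTt)
      _ = M * C * Real.exp (-α * (s - t)) := by ring
  calc _ ≤ ∫ t in Iic s, M * C * Real.exp (-α * (s - t)) :=
        norm_integral_sub_integral_le (aestronglyMeasurable_apply_sub_Iic hT hg₂ s)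
          (aestronglyMeasurable_apply_sub_Iic hT hg₁ s)
          ((integrableOn_exp_neg_mul_sub_Iic hα s).const_mul _)
          ((ae_restrict_mem measurableSet_Iic).mono hpointwise)
    _ = M / α * C := by
        rw [integral_const_mul, integral_exp_neg_mul_sub_Iic hα]; ring

end Semigroup

lemma stronglyMeasurable_apply_setIntegral_Iic {X Y Z : Type*} [NormedAddCommGroup X]
    [NormedAddCommGroup Y] [NormedSpace ℝ Y] [NormedAddCommGroup Z]
    {F : ℝ → X → Y → Z} (hF : Continuous fun p : ℝ × X × Y => F p.1 p.2.1 p.2.2)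
    {H : ℝ → ℝ → X → Y} (hH : Continuous fun p : ℝ × ℝ × X => H p.1 p.2.1 p.2.2)
    {u : ℝ → X} (hu : Continuous u) :
    StronglyMeasurable fun t => F t (u t) (∫ τ in Iic t, H t τ (u τ)) :=
  hF.comp_stronglyMeasurable (stronglyMeasurable_id.prodMk
    (hu.stronglyMeasurable.prodMk (stronglyMeasurable_setIntegral_Iic
      (f := fun t τ => H t τ (u τ)) (hH.comp (continuous_fst.prodMk
        (continuous_snd.prodMk (hu.comp continuous_snd)))).stronglyMeasurable)))

lemma norm_sub_le_iSup_norm_sub {ι E : Type*} [SeminormedAddCommGroup E] {f g : ι → E}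
    (hf : ∃ C, ∀ i, ‖f i‖ ≤ C) (hg : ∃ C, ∀ i, ‖g i‖ ≤ C) (i : ι) :
    ‖f i - g i‖ ≤ ⨆ j, ‖f j - g j‖ := by
  obtain ⟨Cf, hCf⟩ := hf
  obtain ⟨Cg, hCg⟩ := hg
  refine le_ciSup (f := fun j => ‖f j - g j‖) ⟨Cf + Cg, ?_⟩ i
  rintro _ ⟨j, rfl⟩
  exact (norm_sub_le _ _).trans (add_le_add (hCf j) (hCg j))

theorem whole_line_solution_operator_lipschitz_general
    {Y : Type*} [NormedAddCommGroup Y] [NormedSpace ℝ Y]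
    (T : ℝ → Y →L[ℝ] Y) (M α : ℝ) (hα : 0 < α)
    (hTcont : ∀ x : Y, ContinuousOn (fun t => T t x) (Set.Ici (0 : ℝ)))
    (hTbound : ∀ t ≥ (0 : ℝ), ‖T t‖ ≤ M * Real.exp (-α * t))
    (F : ℝ → Y → Y → Y)
    (hFcont : Continuous fun p : ℝ × Y × Y => F p.1 p.2.1 p.2.2)
    (LF : ℝ → ℝ) (LFs : ℝ) (hLF0 : ∀ s, 0 ≤ LF s) (hLFs : ∀ s, LF s ≤ LFs)
    (hFlip : ∀ (s : ℝ) (x₁ x₂ y₁ y₂ : Y),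
      ‖F s x₁ y₁ - F s x₂ y₂‖ ≤ LF s * (‖x₁ - x₂‖ + ‖y₁ - y₂‖))
    (H : ℝ → ℝ → Y → Y)
    (hHcont : Continuous fun p : ℝ × ℝ × Y => H p.1 p.2.1 p.2.2)
    (LH : ℝ → ℝ) (hLH0 : ∀ s, 0 ≤ LH s)
    (hHlip : ∀ (t s : ℝ) (y₁ y₂ : Y), ‖H t s y₁ - H t s y₂‖ ≤ LH s * ‖y₁ - y₂‖)
    (LH1s : ℝ)
    (hLHint : ∀ t : ℝ, IntegrableOn LH (Set.Iic t))
    (hLH1s : ∀ t : ℝ, (∫ τ in Set.Iic t, LH τ) ≤ LH1s)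
    (hHint : ∀ u : ℝ → Y, Continuous u → (∃ C, ∀ t : ℝ, ‖u t‖ ≤ C) →
      ∀ t : ℝ, IntegrableOn (fun τ => H t τ (u τ)) (Set.Iic t))
    (Υ : (ℝ → Y) → ℝ → Y)
    (hΥ : ∀ (u : ℝ → Y) (s : ℝ),
      Υ u s = ∫ t in Set.Iic s, T (s - t) (F t (u t) (∫ τ in Set.Iic t, H t τ (u τ))))
    (y₁ y₂ : ℝ → Y)
    (hy₁cont : Continuous y₁) (hy₁bdd : ∃ C, ∀ t : ℝ, ‖y₁ t‖ ≤ C)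
    (hy₂cont : Continuous y₂) (hy₂bdd : ∃ C, ∀ t : ℝ, ‖y₂ t‖ ≤ C) :
    ∀ s : ℝ, ‖Υ y₂ s - Υ y₁ s‖ ≤
      (M / α) * LFs * (1 + LH1s) * ⨆ t : ℝ, ‖y₂ t - y₁ t‖ := by
  intro s
  set D := ⨆ t : ℝ, ‖y₂ t - y₁ t‖
  have hD : ∀ t, ‖y₂ t - y₁ t‖ ≤ D := norm_sub_le_iSup_norm_sub hy₂bdd hy₁bdd
  set v : (ℝ → Y) → ℝ → Y := fun u t => ∫ τ in Iic t, H t τ (u τ)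
  have hv : ∀ t, ‖v y₂ t - v y₁ t‖ ≤ LH1s * D := fun t =>
    calc ‖v y₂ t - v y₁ t‖ ≤ ∫ τ in Iic t, LH τ * D :=
          norm_integral_sub_integral_le (hHint y₂ hy₂cont hy₂bdd t).1
            (hHint y₁ hy₁cont hy₁bdd t).1 ((hLHint t).mul_const D) (ae_of_all _ fun τ =>
              (hHlip t τ _ _).trans (mul_le_mul_of_nonneg_left (hD τ) (hLH0 τ)))
      _ ≤ LH1s * D := by
          rw [integral_mul_const]
          exact mul_le_mul_of_nonneg_right (hLH1s t) ((norm_nonneg _).trans (hD 0))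
  have hF : ∀ t, ‖F t (y₂ t) (v y₂ t) - F t (y₁ t) (v y₁ t)‖ ≤ LFs * ((1 + LH1s) * D) :=
    fun t => calc
      _ ≤ LF t * (‖y₂ t - y₁ t‖ + ‖v y₂ t - v y₁ t‖) := hFlip t _ _ _ _
      _ ≤ LFs * (D + LH1s * D) := mul_le_mul (hLFs t) (add_le_add (hD t) (hv t))
          (by positivity) ((hLF0 t).trans (hLFs t))
      _ = LFs * ((1 + LH1s) * D) := by ring
  rw [hΥ, hΥ]
  calc _ ≤ M / α * (LFs * ((1 + LH1s) * D)) :=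
        norm_integral_apply_sub_Iic_sub_le hα hTcont hTbound
          (stronglyMeasurable_apply_setIntegral_Iic hFcont hHcont hy₁cont)
          (stronglyMeasurable_apply_setIntegral_Iic hFcont hHcont hy₂cont) hF s
    _ = _ := by ring

/-- Lipschitz estimate for the whole-line solution operator
`Υ u s = ∫_{-∞}^s T (s - t) F (t, u t, ∫_{-∞}^t H (t, τ, u τ) dτ) dt`:
for bounded continuous `y₁, y₂` and all `s`,
`‖Υ y₂ s - Υ y₁ s‖ ≤ (M / α) L_F* (1 + L_H¹*) · sup_t ‖y₂ t - y₁ t‖`. -/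
theorem whole_line_solution_operator_lipschitz
    {Y : Type*} [NormedAddCommGroup Y] [NormedSpace ℝ Y] [CompleteSpace Y]
    (T : ℝ → Y →L[ℝ] Y) (M α : ℝ) (hM : 1 ≤ M) (hα : 0 < α)
    (hT0 : T 0 = ContinuousLinearMap.id ℝ Y)
    (hTadd : ∀ t ≥ (0 : ℝ), ∀ s ≥ (0 : ℝ), T (t + s) = (T t).comp (T s))
    (hTcont : ∀ x : Y, ContinuousOn (fun t => T t x) (Set.Ici (0 : ℝ)))
    (hTbound : ∀ t ≥ (0 : ℝ), ‖T t‖ ≤ M * Real.exp (-α * t))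
    (F : ℝ → Y → Y → Y)
    (hFcont : Continuous fun p : ℝ × Y × Y => F p.1 p.2.1 p.2.2)
    (LF : ℝ → ℝ) (LFs : ℝ) (hLF0 : ∀ s, 0 ≤ LF s) (hLFs : ∀ s, LF s ≤ LFs)
    (hFlip : ∀ (s : ℝ) (x₁ x₂ y₁ y₂ : Y),
      ‖F s x₁ y₁ - F s x₂ y₂‖ ≤ LF s * (‖x₁ - x₂‖ + ‖y₁ - y₂‖))
    (H : ℝ → ℝ → Y → Y)
    (hHcont : Continuous fun p : ℝ × ℝ × Y => H p.1 p.2.1 p.2.2)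
    (LH : ℝ → ℝ) (hLHcont : Continuous LH) (hLH0 : ∀ s, 0 ≤ LH s)
    (hHlip : ∀ (t s : ℝ) (y₁ y₂ : Y), ‖H t s y₁ - H t s y₂‖ ≤ LH s * ‖y₁ - y₂‖)
    (LH1s : ℝ)
    (hLHint : ∀ t : ℝ, IntegrableOn LH (Set.Iic t))
    (hLH1s : ∀ t : ℝ, (∫ τ in Set.Iic t, LH τ) ≤ LH1s)
    (hHint : ∀ u : ℝ → Y, Continuous u → (∃ C, ∀ t : ℝ, ‖u t‖ ≤ C) →
      ∀ t : ℝ, IntegrableOn (fun τ => H t τ (u τ)) (Set.Iic t))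
    (Υ : (ℝ → Y) → ℝ → Y)
    (hΥ : ∀ (u : ℝ → Y) (s : ℝ),
      Υ u s = ∫ t in Set.Iic s, T (s - t) (F t (u t) (∫ τ in Set.Iic t, H t τ (u τ))))
    (y₁ y₂ : ℝ → Y)
    (hy₁cont : Continuous y₁) (hy₁bdd : ∃ C, ∀ t : ℝ, ‖y₁ t‖ ≤ C)
    (hy₂cont : Continuous y₂) (hy₂bdd : ∃ C, ∀ t : ℝ, ‖y₂ t‖ ≤ C) :
    ∀ s : ℝ, ‖Υ y₂ s - Υ y₁ s‖ ≤
      (M / α) * LFs * (1 + LH1s) * ⨆ t : ℝ, ‖y₂ t - y₁ t‖ :=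
  whole_line_solution_operator_lipschitz_general T M α hα hTcont hTbound F hFcont LF LFs hLF0 hLFs
    hFlip H hHcont LH hLH0 hHlip LH1s hLHint hLH1s hHint Υ hΥ y₁ y₂ hy₁cont hy₁bdd hy₂cont hy₂bdd
end
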